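/- arXiv:2412.03519 — 2 statements merged into one kernel-verified Lean document; each statement's English description precedes it below -/
import Mathlib

section
/- Let O be a discrete valuation ring with maximal ideal 𝔪 and finite residue field of cardinality q, and let n ≥ 2. The subgroup K¹ = {A ∈ GLₙ(O) : A_{i1} ∈ 𝔪 for all 2 ≤ i ≤ n} has index (qⁿ − 1)/(q − 1) in GLₙ(O). -/
open scoped LinearAlgebra.Projectivization
open Matrix

namespace Stmt9Aux

variable {K : Type*} [Field K] {n : ℕ}

lemma mulVecLin_inj (g : GL (Fin n) K) :
    Function.Injective (Matrix.mulVecLin (g : Matrix (Fin n) (Fin n) K)) := by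
  have h : Matrix.mulVecLin ((↑(g⁻¹) : Matrix (Fin n) (Fin n) K)) ∘ₗ
      Matrix.mulVecLin ((g : Matrix (Fin n) (Fin n) K)) = LinearMap.id := by
    rw [← Matrix.mulVecLin_mul, ← Matrix.GeneralLinearGroup.coe_mul, inv_mul_cancel,
      Matrix.GeneralLinearGroup.coe_one, Matrix.mulVecLin_one]
  exact Function.LeftInverse.injective (g := Matrix.mulVecLin ((↑(g⁻¹) : Matrix (Fin n) (Fin n) K)))
    fun w => by simpa using congrFun (congrArg DFunLike.coe h) w

noncomputable instance : MulAction (GL (Fin n) K) (ℙ K (Fin n → K)) where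
  smul g x := Projectivization.map (Matrix.mulVecLin (g : Matrix (Fin n) (Fin n) K))
    (mulVecLin_inj g) x
  one_smul x := by
    show Projectivization.map _ _ x = x
    simp only [Matrix.GeneralLinearGroup.coe_one, Matrix.mulVecLin_one]
    rw [Projectivization.map_id]
    rfl
  mul_smul g h x := by
    show Projectivization.map _ _ x = Projectivization.map _ _ (Projectivization.map _ _ x)
    simp only [Matrix.GeneralLinearGroup.coe_mul, Matrix.mulVecLin_mul]
    rw [Projectivization.map_comp]
    rfl

lemma gl_smul_mk (g : GL (Fin n) K) (v : Fin n → K) (hv : v ≠ 0) :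
    g • Projectivization.mk K v hv =
      Projectivization.mk K ((g : Matrix (Fin n) (Fin n) K) *ᵥ v)
        (by simpa [Matrix.mulVecLin_apply] using
          (mulVecLin_inj g).ne_iff' (map_zero _) |>.mpr hv) := by
  show Projectivization.map _ _ _ = _
  rw [Projectivization.map_mk]
  simp [Matrix.mulVecLin_apply]

noncomputable def shear (j : Fin n) (v : Fin n → K) (hvj : v j ≠ 0) :
    (Fin n → K) ≃ₗ[K] (Fin n → K) :=
  LinearEquiv.ofLinear
    (LinearMap.id + (LinearMap.proj j).smulRight (v - Pi.single j 1))
    (LinearMap.id - ((v j)⁻¹ • LinearMap.proj j).smulRight (v - Pi.single j 1))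
    (by
      ext w i
      simp only [LinearMap.coe_comp, Function.comp_apply, LinearMap.add_apply,
        LinearMap.sub_apply, LinearMap.id_coe, id_eq, LinearMap.smulRight_apply,
        LinearMap.smul_apply, LinearMap.proj_apply, smul_eq_mul, Pi.sub_apply,
        Pi.add_apply, Pi.smul_apply, Pi.single_eq_same]
      field_simp
      ring)
    (by
      ext w i
      simp only [LinearMap.coe_comp, Function.comp_apply, LinearMap.add_apply,
        LinearMap.sub_apply, LinearMap.id_coe, id_eq, LinearMap.smulRight_apply,
        LinearMap.smul_apply, LinearMap.proj_apply, smul_eq_mul, Pi.sub_apply,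
        Pi.add_apply, Pi.smul_apply, Pi.single_eq_same]
      field_simp
      ring)

lemma residue_zero_iff {O : Type*} [CommRing O] [IsLocalRing O] (x : O) :
    IsLocalRing.residue O x = 0 ↔ x ∈ IsLocalRing.maximalIdeal O :=
  Ideal.Quotient.eq_zero_iff_mem

lemma single_one_ne_zero (i0 : Fin n) : (Pi.single i0 1 : Fin n → K) ≠ 0 :=
  fun h => one_ne_zero (α := K) (by simpa using congrFun h i0)

lemma shear_single (j : Fin n) (v : Fin n → K) (hvj : v j ≠ 0) :
    shear j v hvj (Pi.single j 1) = v := by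
  show ((LinearMap.id + (LinearMap.proj j).smulRight (v - Pi.single j 1)) :
      (Fin n → K) →ₗ[K] (Fin n → K)) (Pi.single j 1) = v
  simp [LinearMap.smulRight_apply]

noncomputable def glOf (f : (Fin n → K) ≃ₗ[K] (Fin n → K)) : GL (Fin n) K :=
  Matrix.GeneralLinearGroup.toLin.symm
    ((LinearMap.GeneralLinearGroup.generalLinearEquiv K _).symm f)

lemma glOf_mulVec (f : (Fin n → K) ≃ₗ[K] (Fin n → K)) (w : Fin n → K) :
    (glOf f : Matrix (Fin n) (Fin n) K) *ᵥ w = f w := by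
  have : (glOf f : Matrix (Fin n) (Fin n) K)
      = LinearMap.toMatrix' (f : (Fin n → K) →ₗ[K] (Fin n → K)) := by
    simp [glOf, Matrix.GeneralLinearGroup.toLin, Units.mapEquiv,
      LinearMap.GeneralLinearGroup.generalLinearEquiv,
      LinearMap.GeneralLinearGroup.ofLinearEquiv, Matrix.toLinAlgEquiv',
      LinearMap.toMatrixAlgEquiv']
  rw [this, ← Matrix.toLin'_apply, Matrix.toLin'_toMatrix']
  rfl

lemma exists_linEquiv (i0 : Fin n) (v : Fin n → K) (hv : v ≠ 0) :
    ∃ f : (Fin n → K) ≃ₗ[K] (Fin n → K), f (Pi.single i0 1) = v := by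
  obtain ⟨j, hj⟩ := Function.ne_iff.mp hv
  simp only [Pi.zero_apply] at hj
  refine ⟨(LinearEquiv.funCongrLeft K K (Equiv.swap i0 j)).trans (shear j v hj), ?_⟩
  have hP : (LinearEquiv.funCongrLeft K K (Equiv.swap i0 j)) (Pi.single i0 1)
      = Pi.single j (1 : K) := by
    funext i
    simp only [LinearEquiv.funCongrLeft_apply, LinearMap.funLeft_apply]
    simp [Pi.single_apply, Equiv.swap_apply_eq_iff, Equiv.swap_apply_left]
  rw [LinearEquiv.trans_apply, hP, shear_single]

/-- transitivity of the `GL` action on the projectivization -/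
lemma exists_gl_smul (i0 : Fin n) (x : ℙ K (Fin n → K)) :
    ∃ g : GL (Fin n) K,
      g • Projectivization.mk K (Pi.single i0 1) (single_one_ne_zero i0) = x := by
  induction' x using Quotient.inductionOn' with s
  obtain ⟨v, hv⟩ := s
  obtain ⟨f, hf⟩ := exists_linEquiv i0 v hv
  refine ⟨glOf f, ?_⟩
  rw [gl_smul_mk]
  have : (glOf f : Matrix (Fin n) (Fin n) K) *ᵥ Pi.single i0 1 = v := by
    rw [glOf_mulVec, hf]
  refine (Projectivization.mk_eq_mk_iff' K _ _ _ _).mpr ⟨1, ?_⟩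
  rw [one_smul]
  exact this.symm



noncomputable def fiberEquiv (x : ℙ K (Fin n → K)) :
    Kˣ ≃ {s : {v : Fin n → K // v ≠ 0} // Projectivization.mk' K s = x} := by
  refine Equiv.ofBijective
    (fun u => ⟨⟨(u : K) • x.rep, smul_ne_zero (Units.ne_zero u) x.rep_nonzero⟩, ?_⟩) ⟨?_, ?_⟩
  · rw [Projectivization.mk'_eq_mk]
    conv_rhs => rw [← Projectivization.mk_rep x]
    exact (Projectivization.mk_eq_mk_iff K _ _ _ _).mpr ⟨u, rfl⟩
  · intro u u' h
    have h2 : (u : K) • x.rep = (u' : K) • x.rep := by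
      simpa using congrArg (fun s => (s.1 : Fin n → K)) h
    have h3 : ((u : K) - (u' : K)) • x.rep = 0 := by rw [sub_smul, h2, sub_self]
    rcases smul_eq_zero.mp h3 with h4 | h4
    · exact Units.ext (sub_eq_zero.mp h4)
    · exact absurd h4 x.rep_nonzero
  · rintro ⟨⟨w, hw⟩, hmk⟩
    rw [Projectivization.mk'_eq_mk] at hmk
    rw [← Projectivization.mk_rep x] at hmk
    obtain ⟨a, ha⟩ := (Projectivization.mk_eq_mk_iff K _ _ _ _).mp hmk
    exact ⟨a, Subtype.ext (Subtype.ext (by simpa [Units.smul_def] using ha))⟩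

noncomputable def projCount (K : Type*) [Field K] (n : ℕ) :
    {v : Fin n → K // v ≠ 0} ≃ (ℙ K (Fin n → K)) × Kˣ :=
  (Equiv.sigmaFiberEquiv (Projectivization.mk' K)).symm.trans
    ((Equiv.sigmaCongrRight fun x => (fiberEquiv x).symm).trans (Equiv.sigmaEquivProd _ _))

lemma card_proj (K : Type*) [Field K] [Finite K] (n : ℕ) :
    (Nat.card K - 1) * Nat.card (ℙ K (Fin n → K)) = Nat.card K ^ n - 1 := by
  have h1 : Nat.card {v : Fin n → K // v ≠ 0} = Nat.card K ^ n - 1 := by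
    letI := Fintype.ofFinite K
    classical
    rw [Nat.card_eq_fintype_card, Nat.card_eq_fintype_card]
    have : Fintype.card {v : Fin n → K // v ≠ 0} =
        Fintype.card (Fin n → K) - Fintype.card {v : Fin n → K // v = 0} := by
      simpa using Fintype.card_subtype_compl (fun v : Fin n → K => v = 0)
    rw [this, Fintype.card_subtype_eq (0 : Fin n → K)]
    simp [Fintype.card_fun]
  have h2 := Nat.card_congr (projCount K n)
  rw [Nat.card_prod, Nat.card_units, h1] at h2
  rw [mul_comm]
  exact h2.symm

end Stmt9Aux


open Stmt9Aux in
/-- Let `O` be a discrete valuation ring with maximal ideal `𝔪` and finite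
residue field of cardinality `q`, and let `n ≥ 2`.  The subgroup
`K¹ = {A ∈ GLₙ(O) : A_{i1} ∈ 𝔪 for all 2 ≤ i ≤ n}` has index `(qⁿ - 1)/(q - 1)` in
`GLₙ(O) = (Matrix (Fin n) (Fin n) O)ˣ`. -/
theorem stmt_9 (O : Type*) [CommRing O] [IsDomain O] [IsDiscreteValuationRing O]
    [Finite (IsLocalRing.ResidueField O)]
    (q : ℕ) (hq : Nat.card (IsLocalRing.ResidueField O) = q)
    (n : ℕ) (hn : 2 ≤ n) :
    ∃ H : Subgroup (Matrix (Fin n) (Fin n) O)ˣ,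
      (H : Set (Matrix (Fin n) (Fin n) O)ˣ) =
        {A : (Matrix (Fin n) (Fin n) O)ˣ |
          ∀ i : Fin n, (i : ℕ) ≠ 0 →
            (A : Matrix (Fin n) (Fin n) O) i ⟨0, by omega⟩ ∈ IsLocalRing.maximalIdeal O} ∧
      H.index = (q ^ n - 1) / (q - 1) := by
  classical
  set k := IsLocalRing.ResidueField O
  have hn0 : 0 < n := by omega
  set i0 : Fin n := ⟨0, hn0⟩ with hi0
  set e : ℙ k (Fin n → k) := Projectivization.mk k (Pi.single i0 1) (single_one_ne_zero i0)
    with he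
  set red : GL (Fin n) O →* GL (Fin n) k :=
    Matrix.GeneralLinearGroup.map (IsLocalRing.residue O) with hred
  refine ⟨Subgroup.comap red (MulAction.stabilizer (GL (Fin n) k) e), ?_, ?_⟩
  · ext A
    simp only [Subgroup.coe_comap, Set.mem_preimage, SetLike.mem_coe,
      MulAction.mem_stabilizer_iff, Set.mem_setOf_eq]
    rw [he, gl_smul_mk]
    rw [Projectivization.mk_eq_mk_iff' k _ _ _ _]
    have hcol : ∀ i : Fin n, ((red A : Matrix (Fin n) (Fin n) k) *ᵥ Pi.single i0 1) i
        = IsLocalRing.residue O ((A : Matrix (Fin n) (Fin n) O) i i0) := by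
      intro i
      simp only [Matrix.mulVec_single, mul_one, hred, MulOpposite.op_one, one_smul, Matrix.col_apply]
      exact Matrix.GeneralLinearGroup.map_apply (n := Fin n) (IsLocalRing.residue O) i i0 A
    constructor
    · rintro ⟨a, ha⟩ i hi
      have hi' : i ≠ i0 := by
        intro hc; exact hi (by rw [hc])
      have := congrFun ha i
      rw [Pi.smul_apply, Pi.single_apply, if_neg hi'] at this
      rw [smul_zero] at this
      rw [← residue_zero_iff, ← hcol i, ← this]
    · intro hA
      refine ⟨((red A : Matrix (Fin n) (Fin n) k) *ᵥ Pi.single i0 1) i0, ?_⟩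
      funext i
      rw [Pi.smul_apply, Pi.single_apply]
      by_cases hi : i = i0
      · rw [if_pos hi, smul_eq_mul, mul_one, hi]
      · rw [if_neg hi, smul_zero, hcol i]
        have : (i : ℕ) ≠ 0 := by
          intro hc; exact hi (Fin.ext (by rw [hc]))
        rw [eq_comm, residue_zero_iff]
        exact hA i this
  · have hsurj : Function.Surjective red := by
      intro B
      set A : Matrix (Fin n) (Fin n) O :=
        fun i j => Function.surjInv (IsLocalRing.residue_surjective (R := O))
          ((B : Matrix (Fin n) (Fin n) k) i j) with hA
      have hmap : A.map (IsLocalRing.residue O) = (B : Matrix (Fin n) (Fin n) k) := by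
        ext i j
        simp only [Matrix.map_apply, hA]
        exact Function.surjInv_eq _ _
      have hdetB : IsUnit ((B : Matrix (Fin n) (Fin n) k).det) :=
        (Matrix.isUnit_iff_isUnit_det _).mp B.isUnit
      have hdet : IsUnit A.det := by
        by_contra hc
        have hm : A.det ∈ IsLocalRing.maximalIdeal O := hc
        have h0 : IsLocalRing.residue O A.det = 0 := (residue_zero_iff _).mpr hm
        rw [RingHom.map_det, RingHom.mapMatrix_apply, hmap] at h0
        rw [h0] at hdetB
        exact (not_isUnit_zero : ¬ IsUnit (0 : k)) hdetB
      have hAU : IsUnit A := (Matrix.isUnit_iff_isUnit_det _).mpr hdet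
      refine ⟨hAU.unit, ?_⟩
      apply Units.ext
      show (RingHom.mapMatrix (IsLocalRing.residue O)) (hAU.unit : Matrix (Fin n) (Fin n) O)
          = (B : Matrix (Fin n) (Fin n) k)
      rw [IsUnit.unit_spec]
      rw [RingHom.mapMatrix_apply]
      exact hmap
    rw [Subgroup.index_comap_of_surjective _ hsurj]
    have htrans : MulAction.IsPretransitive (GL (Fin n) k) (ℙ k (Fin n → k)) := by
      constructor
      intro x y
      obtain ⟨gx, hx⟩ := exists_gl_smul i0 x
      obtain ⟨gy, hy⟩ := exists_gl_smul i0 y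
      refine ⟨gy * gx⁻¹, ?_⟩
      rw [mul_smul, inv_smul_eq_iff.mpr hx.symm]
      exact hy
    rw [MulAction.index_stabilizer_of_transitive]
    have hcard := card_proj k n
    rw [hq] at hcard
    have hq2 : 2 ≤ q := by
      rw [← hq]
      exact Finite.one_lt_card
    have hpos : 0 < q - 1 := by omega
    have hh : q ^ n - 1 = Nat.card (ℙ k (Fin n → k)) * (q - 1) := by
      rw [← hcard, mul_comm]
    exact (Nat.div_eq_of_eq_mul_left hpos hh).symm
end

section
/- With notation as before (O a complete DVR with fraction field K, F a σ-semilinear bijection of a finite-dimensional K-vector space P), let Lat_{≤1}(P) be the set of O-lattices H in P with length_O(H/(H ∩ F(H))) = length_O(F(H)/(H ∩ F(H))) ≤ 1. Define s(H) = inf{ s : S_s(H) = S_{s+1}(H) } where Sᵢ(H) = Σ_{j=0}^{i} F^j(H). If H ∈ Lat_{≤1}(P), then for every 0 ≤ i < s(H) one has length_O(S_{i+1}(H)/Sᵢ(H)) = 1, and Sᵢ(H) ∈ Lat_{≤1}(P) for all finite i. -/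
open scoped Pointwise

/-- `iterSum F H i` is the pointwise set `H + F(H) + ⋯ + Fⁱ(H)`, i.e. `Sᵢ(H) = Σ_{j=0}^{i} Fʲ(H)`. -/
def iterSum {P : Type*} [AddCommGroup P] (F : P → P) (H : Set P) : ℕ → Set P
  | 0 => H
  | (i + 1) => iterSum F H i + F^[i + 1] '' H

/-- The length of an `O`-module `M`: the Krull dimension of its lattice of submodules,
i.e. the supremum of the lengths of chains of submodules. -/
noncomputable def modLength (O M : Type*) [Ring O] [AddCommGroup M] [Module O M] :
    WithBot ℕ∞ :=
  Order.krullDim (Submodule O M)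

/-- The stabilization index `s(H) = inf { s | S_{s+1}(H) = S_s(H) } ∈ ℕ∞` (with `s(H) = ∞`
if the tower `Sᵢ(H)` never stabilizes). -/
noncomputable def sIdx {P : Type*} [AddCommGroup P] (F : P → P) (A : Set P) : ℕ∞ :=
  sInf {x : ℕ∞ | ∃ s : ℕ, x = s ∧ iterSum F A (s + 1) = iterSum F A s}

/-- `H` is an element of `Lat_{≤1}(P)`: an `O`-lattice (finitely generated, `K`-spanning)
with `length_O (H / (H ∩ F(H))) = length_O (F(H) / (H ∩ F(H))) ≤ 1`.  (The image `F(H)` is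
again an `O`-lattice; it is quantified as any submodule `FH` whose underlying set is
`F '' H`.) -/
def IsLatLe1 (O : Type*) [CommRing O] (K : Type*) [Field K] [Algebra O K]
    {P : Type*} [AddCommGroup P] [Module K P] [Module O P] [IsScalarTower O K P]
    (F : P → P) (H : Submodule O P) : Prop :=
  H.FG ∧ Submodule.span K (H : Set P) = ⊤ ∧
    ∀ FH : Submodule O P, (FH : Set P) = F '' (H : Set P) →
      modLength O (↥H ⧸ (H ⊓ FH).comap H.subtype)
          = modLength O (↥FH ⧸ (H ⊓ FH).comap FH.subtype) ∧
        modLength O (↥H ⧸ (H ⊓ FH).comap H.subtype) ≤ 1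

section Aux

variable {α β : Type*}

lemma aux_one_le_krullDim [Preorder α] {a b : α} (h : a < b) : 1 ≤ Order.krullDim α := by
  have h1 : ((1 : ℕ) : WithBot ℕ∞) ≤ Order.krullDim α :=
    Order.LTSeries.length_le_krullDim ⟨1, ![a, b], fun i => by fin_cases i; simpa using h⟩
  simpa using h1

lemma aux_two_le_krullDim [Preorder α] {a b c : α} (h1 : a < b) (h2 : b < c) :
    2 ≤ Order.krullDim α := by
  have h' : ((2 : ℕ) : WithBot ℕ∞) ≤ Order.krullDim α :=
    Order.LTSeries.length_le_krullDim ⟨2, ![a, b, c], fun i => by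
      fin_cases i
      · simpa using h1
      · simpa using h2⟩
  simpa using h'

lemma aux_krullDim_Icc_self [PartialOrder α] (a : α) : Order.krullDim (Set.Icc a a) = 0 := by
  have hne : Nonempty (Set.Icc a a) := ⟨⟨a, le_refl a, le_refl a⟩⟩
  have hsub : Subsingleton (Set.Icc a a) := ⟨by
    rintro ⟨x, hx1, hx2⟩ ⟨y, hy1, hy2⟩
    exact Subtype.ext ((le_antisymm hx2 hx1).trans (le_antisymm hy1 hy2))⟩
  exact le_antisymm Order.krullDim_nonpos_of_subsingleton Order.krullDim_nonneg

lemma aux_one_le_krullDim_Icc [Preorder α] {a b : α} (h : a < b) :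
    1 ≤ Order.krullDim (Set.Icc a b) :=
  aux_one_le_krullDim (a := (⟨a, le_refl a, h.le⟩ : Set.Icc a b))
    (b := ⟨b, h.le, le_refl b⟩) (Subtype.mk_lt_mk.mpr h)

lemma aux_two_le_krullDim_Icc [Preorder α] {a b x y z : α} (h1 : x < y) (h2 : y < z)
    (hax : a ≤ x) (hzb : z ≤ b) : 2 ≤ Order.krullDim (Set.Icc a b) :=
  aux_two_le_krullDim
    (a := (⟨x, hax, (h1.trans h2).le.trans hzb⟩ : Set.Icc a b))
    (b := ⟨y, hax.trans h1.le, h2.le.trans hzb⟩)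
    (c := ⟨z, hax.trans (h1.trans h2).le, hzb⟩)
    (Subtype.mk_lt_mk.mpr h1) (Subtype.mk_lt_mk.mpr h2)

lemma aux_krullDim_Icc_mono [Preorder α] {a b c d : α} (hac : a ≤ c) (hdb : d ≤ b) :
    Order.krullDim (Set.Icc c d) ≤ Order.krullDim (Set.Icc a b) :=
  Order.krullDim_le_of_strictMono
    (fun x => ⟨x.1, hac.trans x.2.1, x.2.2.trans hdb⟩)
    (fun x y hxy => Subtype.mk_lt_mk.mpr (Subtype.coe_lt_coe.mpr hxy))

lemma aux_krullDim_Icc_map [Preorder α] [Preorder β] (e : α ≃o β) (a b : α) :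
    Order.krullDim (Set.Icc a b) = Order.krullDim (Set.Icc (e a) (e b)) := by
  apply le_antisymm
  · exact Order.krullDim_le_of_strictMono
      (fun x => ⟨e x.1, e.monotone x.2.1, e.monotone x.2.2⟩)
      (fun x y hxy => Subtype.mk_lt_mk.mpr (e.strictMono (Subtype.coe_lt_coe.mpr hxy)))
  · refine Order.krullDim_le_of_strictMono
      (fun x => ⟨e.symm x.1, ?_, ?_⟩)
      (fun x y hxy => Subtype.mk_lt_mk.mpr (e.symm.strictMono (Subtype.coe_lt_coe.mpr hxy)))
    · simpa using e.symm.monotone x.2.1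
    · simpa using e.symm.monotone x.2.2

lemma aux_eq_of_krullDim_Icc_le_zero [PartialOrder α] {a b : α} (hab : a ≤ b)
    (h : Order.krullDim (Set.Icc a b) ≤ 0) : a = b := by
  by_contra hne
  have := aux_one_le_krullDim_Icc (lt_of_le_of_ne hab hne)
  exact absurd (this.trans h) (by decide)

/-- The order isomorphism between submodules of `B ⧸ (A ∩ B)` and the interval `[A, B]`. -/
noncomputable def iccOrderIso {R M : Type*} [Ring R] [AddCommGroup M] [Module R M]
    (A B : Submodule R M) (hAB : A ≤ B) :
    Submodule R (↥B ⧸ A.comap B.subtype) ≃o Set.Icc A B :=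
  (Submodule.comapMkQRelIso (A.comap B.subtype)).trans
    { toFun := fun p' => ⟨Submodule.map B.subtype p'.1, by
        constructor
        · have hA : A = Submodule.map B.subtype (A.comap B.subtype) := by
            rw [Submodule.map_comap_subtype, inf_eq_right.mpr hAB]
          exact le_trans (le_of_eq hA) (Submodule.map_mono p'.2)
        · exact Submodule.map_subtype_le B p'.1⟩
      invFun := fun q => ⟨Submodule.comap B.subtype q.1, Submodule.comap_mono q.2.1⟩
      left_inv := fun p' => Subtype.ext
        (Submodule.comap_map_eq_of_injective B.injective_subtype p'.1)
      right_inv := fun q => Subtype.ext (by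
        show Submodule.map B.subtype (Submodule.comap B.subtype q.1) = q.1
        rw [Submodule.map_comap_subtype]
        exact inf_eq_right.mpr q.2.2)
      map_rel_iff' := fun {p₁ p₂} =>
        (Submodule.map_le_map_iff_of_injective B.injective_subtype p₁.1 p₂.1) }

lemma modLength_eq_krullDim_Icc {R M : Type*} [Ring R] [AddCommGroup M] [Module R M]
    (A B : Submodule R M) (hAB : A ≤ B) :
    modLength R (↥B ⧸ A.comap B.subtype) = Order.krullDim (Set.Icc A B) :=
  Order.krullDim_eq_of_orderIso (iccOrderIso A B hAB)

end Aux

/-- Setting: `O` a complete DVR with fraction field `K`, `F` a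
`σ`-semilinear bijection of a finite-dimensional `K`-vector space `P`.  If
`H ∈ Lat_{≤1}(P)`, then for every `0 ≤ i < s(H)` one has
`length_O (S_{i+1}(H)/Sᵢ(H)) = 1`, and `Sᵢ(H) ∈ Lat_{≤1}(P)` for all finite `i`. -/
theorem stmt_15
    (O : Type*) [CommRing O] [IsDomain O] [IsDiscreteValuationRing O]
    [IsAdicComplete (IsLocalRing.maximalIdeal O) O]
    (K : Type*) [Field K] [Algebra O K] [IsFractionRing O K]
    (σ : K ≃+* K) (hσO : ∀ a : O, ∃ b : O, σ (algebraMap O K a) = algebraMap O K b)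
    (hσO' : ∀ b : O, ∃ a : O, σ (algebraMap O K a) = algebraMap O K b)
    (π : O) (hπ : Irreducible π) (hσπ : σ (algebraMap O K π) = algebraMap O K π)
    (P : Type*) [AddCommGroup P] [Module K P] [FiniteDimensional K P]
    [Module O P] [IsScalarTower O K P]
    (F : P →+ P) (hFbij : Function.Bijective F)
    (hFsemi : ∀ (a : K) (x : P), F (a • x) = σ a • F x)
    (H : Submodule O P) (hH : IsLatLe1 O K F H) :
    (∀ i : ℕ, (i : ℕ∞) < sIdx F (H : Set P) →
      ∀ Si Si1 : Submodule O P,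
        (Si : Set P) = iterSum F (H : Set P) i →
        (Si1 : Set P) = iterSum F (H : Set P) (i + 1) →
        modLength O (↥Si1 ⧸ Si.comap Si1.subtype) = 1) ∧
    (∀ i : ℕ, ∀ Si : Submodule O P,
      (Si : Set P) = iterSum F (H : Set P) i → IsLatLe1 O K F Si) := by
  classical
  obtain ⟨hFG, hspan, hlen⟩ := hH
  have hinj : Function.Injective (algebraMap O K) := IsFractionRing.injective O K
  have halg : ∀ a : O, algebraMap O K (Classical.choose (hσO a)) = σ (algebraMap O K a) :=
    fun a => (Classical.choose_spec (hσO a)).symm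
  let τ : O →+* O :=
  { toFun := fun a => Classical.choose (hσO a)
    map_one' := hinj (by rw [halg]; simp)
    map_mul' := fun a b => hinj (by rw [halg, map_mul, map_mul, map_mul, halg, halg])
    map_zero' := hinj (by rw [halg]; simp)
    map_add' := fun a b => hinj (by rw [halg, map_add, map_add, map_add, halg, halg]) }
  have hτ : ∀ a : O, algebraMap O K (τ a) = σ (algebraMap O K a) := halg
  have hτsurj : Function.Surjective τ := by
    intro b
    obtain ⟨a, ha⟩ := hσO' b
    exact ⟨a, hinj (by rw [hτ, ha])⟩
  haveI : RingHomSurjective τ := ⟨hτsurj⟩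
  let f : P →ₛₗ[τ] P :=
  { toFun := F
    map_add' := F.map_add
    map_smul' := fun a x => by
      show F (a • x) = τ a • F x
      rw [← algebraMap_smul K a x, hFsemi, ← hτ, algebraMap_smul] }
  have hfbij : Function.Bijective f := hFbij
  let mapF : Submodule O P ≃o Submodule O P :=
    Submodule.orderIsoMapComapOfBijective f hfbij
  have hmapF_coe : ∀ A : Submodule O P, (mapF A : Set P) = ⇑F '' (A : Set P) :=
    fun A => Submodule.map_coe f A
  have hmapF_sup : ∀ A B : Submodule O P, mapF (A ⊔ B) = mapF A ⊔ mapF B :=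
    fun A B => mapF.map_sup A B
  let T : ℕ → Submodule O P := fun j => (⇑mapF)^[j] H
  have hT0 : T 0 = H := rfl
  have hTsucc : ∀ j, T (j + 1) = mapF (T j) := fun j => Function.iterate_succ_apply' (⇑mapF) j H
  have hTcoe : ∀ j, (T j : Set P) = (⇑F)^[j] '' (H : Set P) := by
    intro j
    induction j with
    | zero => simp [hT0]
    | succ j ih =>
        rw [hTsucc, hmapF_coe, ih, ← Set.image_comp, ← Function.iterate_succ']
  let S : ℕ → Submodule O P := fun n => Nat.rec H (fun i Si => Si ⊔ T (i + 1)) n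
  have hS0 : S 0 = H := rfl
  have hSsucc : ∀ i, S (i + 1) = S i ⊔ T (i + 1) := fun i => rfl
  have hScoe : ∀ i, SetLike.coe (S i) = iterSum (⇑F) (H : Set P) i := by
    intro i
    induction i with
    | zero => rfl
    | succ i ih =>
        rw [hSsucc, Submodule.coe_sup, ih, hTcoe]
        rfl
  have hSle : ∀ i, S i ≤ S (i + 1) := fun i => by rw [hSsucc]; exact le_sup_left
  have hHle : ∀ i, H ≤ S i := by
    intro i
    induction i with
    | zero => exact le_of_eq hS0.symm
    | succ i ih => exact ih.trans (hSle i)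
  have key2 : ∀ i, S i ⊔ mapF (S i) = S (i + 1) := by
    intro i
    induction i with
    | zero => rw [hSsucc, hTsucc, hT0, hS0]
    | succ i ih =>
        have h1 : mapF (S (i + 1)) = mapF (S i) ⊔ T (i + 2) := by
          rw [hSsucc i, hmapF_sup, ← hTsucc]
        have h2 : mapF (S i) ≤ S (i + 1) := by rw [← ih]; exact le_sup_right
        rw [h1, ← sup_assoc, sup_eq_left.mpr h2, hSsucc (i + 1)]
  have hmapFleS : ∀ i, mapF (S i) ≤ S (i + 1) := fun i => by
    rw [← key2]; exact le_sup_right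
  have hmod1 : ∀ i, Order.krullDim (Set.Icc (S i ⊓ mapF (S i)) (mapF (S i)))
      = Order.krullDim (Set.Icc (S i) (S (i + 1))) := by
    intro i
    have h := Order.krullDim_eq_of_orderIso (infIccOrderIsoIccSup (mapF (S i)) (S i))
    rw [inf_comm (mapF (S i)) (S i), sup_comm (mapF (S i)) (S i), key2 i] at h
    exact h
  have hmod2 : ∀ i, Order.krullDim (Set.Icc (S i ⊓ mapF (S i)) (S i))
      = Order.krullDim (Set.Icc (mapF (S i)) (S (i + 1))) := by
    intro i
    have h := Order.krullDim_eq_of_orderIso (infIccOrderIsoIccSup (S i) (mapF (S i)))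
    rw [key2 i] at h
    exact h
  have hFicc : ∀ A B : Submodule O P, Order.krullDim (Set.Icc A B)
      = Order.krullDim (Set.Icc (mapF A) (mapF B)) := fun A B => aux_krullDim_Icc_map mapF A B
  have key : ∀ i, Order.krullDim (Set.Icc (S i) (S (i + 1)))
      = Order.krullDim (Set.Icc (S i ⊓ mapF (S i)) (S i)) ∧
      Order.krullDim (Set.Icc (S i) (S (i + 1))) ≤ 1 := by
    intro i
    induction i with
    | zero =>
        obtain ⟨heq, hle1⟩ := hlen (mapF H) (hmapF_coe H)
        rw [modLength_eq_krullDim_Icc _ _ inf_le_left,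
            modLength_eq_krullDim_Icc _ _ inf_le_right] at heq
        rw [modLength_eq_krullDim_Icc _ _ inf_le_left] at hle1
        rw [← hS0] at heq hle1
        constructor
        · rw [← hmod1 0]
          exact heq.symm
        · rw [← hmod1 0, ← heq]
          exact hle1
    | succ i ih =>
        obtain ⟨ihe, ihle⟩ := ih
        have hble : Order.krullDim (Set.Icc (S i ⊓ mapF (S i)) (S i)) ≤ 1 :=
          (le_of_eq ihe.symm).trans ihle
        have hsub1 : mapF (S i) ≤ S (i + 1) ⊓ mapF (S (i + 1)) :=
          le_inf (hmapFleS i) (mapF.monotone (hSle i))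
        have ha1 : Order.krullDim (Set.Icc (S (i + 1)) (S (i + 2))) ≤
            Order.krullDim (Set.Icc (S i) (S (i + 1))) := by
          rw [← hmod1 (i + 1), hFicc (S i) (S (i + 1))]
          exact aux_krullDim_Icc_mono hsub1 le_rfl
        have hb1 : Order.krullDim (Set.Icc (S (i + 1) ⊓ mapF (S (i + 1))) (S (i + 1))) ≤
            Order.krullDim (Set.Icc (S i ⊓ mapF (S i)) (S i)) := by
          rw [hmod2 i]
          exact aux_krullDim_Icc_mono hsub1 le_rfl
        by_cases h1 : mapF (S (i + 1)) ≤ S (i + 1)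
        · by_cases h2 : S (i + 1) ≤ mapF (S (i + 1))
          · have hSeq : S (i + 2) = S (i + 1) := by
              rw [← key2 (i + 1), sup_eq_left.mpr h1]
            have hinfeq : S (i + 1) ⊓ mapF (S (i + 1)) = S (i + 1) := inf_eq_left.mpr h2
            rw [hSeq, hinfeq, aux_krullDim_Icc_self]
            exact ⟨rfl, by decide⟩
          · exfalso
            have hlt : mapF (S (i + 1)) < S (i + 1) :=
              lt_of_le_of_ne h1 (fun he => h2 (le_of_eq he.symm))
            have hle' : mapF (S i) ≤ mapF (S (i + 1)) := mapF.monotone (hSle i)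
            by_cases h3 : mapF (S i) < mapF (S (i + 1))
            · have h2le : 2 ≤ Order.krullDim (Set.Icc (mapF (S i)) (S (i + 1))) :=
                aux_two_le_krullDim_Icc h3 hlt le_rfl le_rfl
              rw [← hmod2 i] at h2le
              exact absurd ((h2le.trans hble) : (2 : WithBot ℕ∞) ≤ 1) (by decide)
            · have h3eq : mapF (S i) = mapF (S (i + 1)) := hle'.lt_or_eq.resolve_left h3
              have h1le : 1 ≤ Order.krullDim (Set.Icc (mapF (S i)) (S (i + 1))) :=
                aux_one_le_krullDim_Icc (h3eq ▸ hlt)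
              rw [← hmod2 i] at h1le
              have hSieq : S i = S (i + 1) := mapF.injective h3eq
              have hai : Order.krullDim (Set.Icc (S i) (S (i + 1))) = 0 := by
                conv_lhs => rw [hSieq]
                exact aux_krullDim_Icc_self _
              rw [← ihe, hai] at h1le
              exact absurd h1le (by decide)
        · by_cases h2 : S (i + 1) ≤ mapF (S (i + 1))
          · exfalso
            have hlt : S (i + 1) < mapF (S (i + 1)) :=
              lt_of_le_of_ne h2 (fun he => h1 (le_of_eq he.symm))
            by_cases hc : mapF (S i) < S (i + 1)
            · have h2le : 2 ≤ Order.krullDim (Set.Icc (mapF (S i)) (mapF (S (i + 1)))) :=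
                aux_two_le_krullDim_Icc hc hlt le_rfl le_rfl
              rw [← hFicc (S i) (S (i + 1))] at h2le
              exact absurd ((h2le.trans ihle) : (2 : WithBot ℕ∞) ≤ 1) (by decide)
            · have hceq : mapF (S i) = S (i + 1) := (hmapFleS i).lt_or_eq.resolve_left hc
              have hSle' : S i ≤ mapF (S i) := hceq ▸ hSle i
              have hbi : Order.krullDim (Set.Icc (S i ⊓ mapF (S i)) (S i)) = 0 := by
                rw [inf_eq_left.mpr hSle']
                exact aux_krullDim_Icc_self _
              have hai0 : Order.krullDim (Set.Icc (S i) (S (i + 1))) ≤ 0 := by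
                rw [ihe, hbi]
              have hSieq : S i = S (i + 1) := aux_eq_of_krullDim_Icc_le_zero (hSle i) hai0
              have : mapF (S (i + 1)) = S (i + 1) := by
                rw [← hSieq, hceq, hSieq]
              exact absurd (this ▸ hlt) (lt_irrefl _)
          · have hlt1 : S (i + 1) < S (i + 2) := by
              rw [← key2 (i + 1)]
              exact left_lt_sup.mpr h1
            have hlt2 : S (i + 1) ⊓ mapF (S (i + 1)) < S (i + 1) := inf_lt_left.mpr h2
            have hA : Order.krullDim (Set.Icc (S (i + 1)) (S (i + 2))) = 1 :=
              le_antisymm (ha1.trans ihle) (aux_one_le_krullDim_Icc hlt1)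
            have hB : Order.krullDim (Set.Icc (S (i + 1) ⊓ mapF (S (i + 1))) (S (i + 1))) = 1 :=
              le_antisymm (hb1.trans hble) (aux_one_le_krullDim_Icc hlt2)
            exact ⟨hA.trans hB.symm, le_of_eq hA⟩
  refine ⟨?_, ?_⟩
  · intro i hi Si Si1 hSi hSi1
    have e1 : Si = S i := SetLike.ext' (hSi.trans (hScoe i).symm)
    have e2 : Si1 = S (i + 1) := SetLike.ext' (hSi1.trans (hScoe (i + 1)).symm)
    subst e1
    subst e2
    rw [modLength_eq_krullDim_Icc _ _ (hSle i)]
    have hne : S i ≠ S (i + 1) := by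
      intro he
      have hmem : (↑i : ℕ∞) ∈ {x : ℕ∞ | ∃ s : ℕ, x = (s : ℕ∞) ∧
          iterSum (⇑F) (H : Set P) (s + 1) = iterSum (⇑F) (H : Set P) s} :=
        ⟨i, rfl, by rw [← hScoe, ← hScoe, he]⟩
      exact absurd (sInf_le hmem) (not_le.mpr hi)
    exact le_antisymm (key i).2 (aux_one_le_krullDim_Icc (lt_of_le_of_ne (hSle i) hne))
  · intro i Si hSi
    have e1 : Si = S i := SetLike.ext' (hSi.trans (hScoe i).symm)
    subst e1
    have hTfg : ∀ j, (T j).FG := by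
      intro j
      induction j with
      | zero => exact hFG
      | succ j ih =>
          rw [hTsucc]
          obtain ⟨s, hsfin, hs⟩ := Submodule.fg_def.mp ih
          refine Submodule.fg_def.mpr ⟨⇑f '' s, hsfin.image _, ?_⟩
          rw [← Submodule.map_span, hs]
          rfl
    have hSfg : ∀ j, (S j).FG := by
      intro j
      induction j with
      | zero => exact hFG
      | succ j ih =>
          rw [hSsucc]
          exact Submodule.FG.sup ih (hTfg (j + 1))
    refine ⟨hSfg i, ?_, ?_⟩
    · rw [eq_top_iff, ← hspan]
      exact Submodule.span_mono (hHle i)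
    · intro FH hFH
      have e2 : FH = mapF (S i) := SetLike.ext' (hFH.trans (hmapF_coe (S i)).symm)
      subst e2
      rw [modLength_eq_krullDim_Icc _ _ inf_le_left,
          modLength_eq_krullDim_Icc _ _ inf_le_right, hmod1 i]
      exact ⟨(key i).1.symm, (le_of_eq (key i).1.symm).trans (key i).2⟩
end
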